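/- Let k ≥ 2, let G_k be a 3-regular bipartite graph on 2k vertices with bipartition into independent sets A and B of size k, let H_k be as constructed, and let σ ∈ Res(G_k, H_k). Let A(σ) be the signed adjacency matrix of the mismatch graph G_k^σ − H_k (entries +1 on positive edges, −1 on negative edges, 0 otherwise) and let P(σ) = A(σ)². Then for every vertex x of degree 4 in G_k^σ − H_k there exists a vertex v ≠ x with P(σ)_{xv} ≠ 0. -/
import Mathlib


open SimpleGraph

section MismatchDefs

variable {V W : Type*}

/-- The mismatch graph `G^π − H`: the symmetric difference of the image of `G` under the
bijection `π` with `H`, as a graph on `V(H)`. Its edges are the positive edges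
(edges of `G^π` not in `H`) together with the negative edges (edges of `H` not in `G^π`). -/
def mismatchGraph (G : SimpleGraph V) (H : SimpleGraph W) (π : V ≃ W) : SimpleGraph W :=
  symmDiff (G.map π.toEmbedding) H

/-- The degree of a vertex in the mismatch graph `G^π − H`. -/
noncomputable def mismatchDeg (G : SimpleGraph V) (H : SimpleGraph W) (π : V ≃ W) (x : W) : ℕ :=
  ((mismatchGraph G H π).neighborSet x).ncard

/-- The number of positive edges of `G^π − H` incident to `x`. -/
noncomputable def posDeg (G : SimpleGraph V) (H : SimpleGraph W) (π : V ≃ W) (x : W) : ℕ :=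
  ((G.map π.toEmbedding).neighborSet x \ H.neighborSet x).ncard

/-- The number of negative edges of `G^π − H` incident to `x`. -/
noncomputable def negDeg (G : SimpleGraph V) (H : SimpleGraph W) (π : V ≃ W) (x : W) : ℕ :=
  (H.neighborSet x \ (G.map π.toEmbedding).neighborSet x).ncard

/-- The maximum mismatch count `MMC(π)`: the maximum degree of the mismatch graph `G^π − H`. -/
noncomputable def MMC [Fintype W] (G : SimpleGraph V) (H : SimpleGraph W) (π : V ≃ W) : ℕ :=
  Finset.univ.sup (mismatchDeg G H π)

/-- The edit mismatch norm `μ_edit(G^π, H)`: the number of edges of the mismatch graph. -/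
noncomputable def muEdit (G : SimpleGraph V) (H : SimpleGraph W) (π : V ≃ W) : ℕ :=
  (mismatchGraph G H π).edgeSet.ncard

/-- The edit distance `δ_edit(G, H)`: the minimum of `μ_edit(G^π, H)` over all bijections. -/
noncomputable def deltaEdit (G : SimpleGraph V) (H : SimpleGraph W) : ℕ :=
  ⨅ π : V ≃ W, muEdit G H π

open Classical in
/-- The signed adjacency matrix of the mismatch graph `G^π − H`:
`+1` on positive edges, `−1` on negative edges, `0` otherwise. -/
noncomputable def signedAdj (G : SimpleGraph V) (H : SimpleGraph W) (π : V ≃ W) :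
    Matrix W W ℝ := fun x y =>
  if (G.map π.toEmbedding).Adj x y ∧ ¬ H.Adj x y then 1
  else if H.Adj x y ∧ ¬ (G.map π.toEmbedding).Adj x y then -1 else 0

/-- The `ℓ_p` norm of a vector over a finite index type. -/
noncomputable def lpNorm [Fintype W] (p : ℝ) (x : W → ℝ) : ℝ :=
  (∑ i, |x i| ^ p) ^ p⁻¹

/-- The `ℓ_p`-operator norm of a matrix: `sup_{x ≠ 0} ‖Mx‖_p / ‖x‖_p`. -/
noncomputable def lpOpNorm [Fintype W] (p : ℝ) (M : Matrix W W ℝ) : ℝ :=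
  ⨆ x : {x : W → ℝ // x ≠ 0}, lpNorm p (M.mulVec x.1) / lpNorm p x.1

end MismatchDefs

/-- The graph `H_k` on vertex set `{0, 1, …, 2k−1}`: the Hamiltonian cycle
`0 − 1 − ⋯ − (2k−1) − 0` together with, for even `k`, the chords `{i, i+2}` for
`i ≡ 0, 1 (mod 4)`, and for odd `k`, the chords `{i, i−2}` for `i ≡ 2 (mod 4)`,
`{i, i+2}` for `i ≡ 3 (mod 4)`, and `{2k−2, 1}`. -/
def Hk (k : ℕ) : SimpleGraph (Fin (2 * k)) :=
  SimpleGraph.fromRel (fun a b =>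
    (b.val = a.val + 1) ∨ (a.val = 2 * k - 1 ∧ b.val = 0) ∨
    (if k % 2 = 0 then
      (a.val % 4 = 0 ∨ a.val % 4 = 1) ∧ b.val = a.val + 2
    else
      (a.val % 4 = 2 ∧ b.val = a.val - 2) ∨ (a.val % 4 = 3 ∧ b.val = a.val + 2) ∨
        (a.val = 2 * k - 2 ∧ b.val = 1)))

/-- Attach `5` new pendant leaves to every vertex satisfying `P` and `12` new pendant
leaves to every other vertex. The leaves of `v` are `Sum.inr ⟨v, i⟩`. -/
def hatGraph {V : Type*} (G : SimpleGraph V) (P : V → Prop) [DecidablePred P] :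
    SimpleGraph (V ⊕ Σ v : V, Fin (if P v then 5 else 12)) :=
  SimpleGraph.fromRel (fun a b =>
    match a, b with
    | Sum.inl u, Sum.inl v => G.Adj u v
    | Sum.inl u, Sum.inr x => u = x.1
    | _, _ => False)

/-- `σ ∈ Res(G_k, H_k)`: the bijection `σ` maps the independent set `A` onto the even
vertices `Even(2k)` (and hence its complement `B` onto the odd vertices `Odd(2k)`). -/
def InRes {V : Type*} (k : ℕ) (A : Finset V) (σ : V ≃ Fin (2 * k)) : Prop :=
  ∀ v, v ∈ A ↔ (σ v).val % 2 = 0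

attribute [local instance] Classical.propDecidable
lemma hk_adj {k : ℕ} {a b : Fin (2*k)} : (Hk k).Adj a b ↔ a ≠ b ∧
    (((b.val = a.val + 1) ∨ (a.val = 2 * k - 1 ∧ b.val = 0) ∨
    (if k % 2 = 0 then
      (a.val % 4 = 0 ∨ a.val % 4 = 1) ∧ b.val = a.val + 2
    else
      (a.val % 4 = 2 ∧ b.val = a.val - 2) ∨ (a.val % 4 = 3 ∧ b.val = a.val + 2) ∨
        (a.val = 2 * k - 2 ∧ b.val = 1))) ∨ ((a.val = b.val + 1) ∨ (b.val = 2 * k - 1 ∧ a.val = 0) ∨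
    (if k % 2 = 0 then
      (b.val % 4 = 0 ∨ b.val % 4 = 1) ∧ a.val = b.val + 2
    else
      (b.val % 4 = 2 ∧ a.val = b.val - 2) ∨ (b.val % 4 = 3 ∧ a.val = b.val + 2) ∨
        (b.val = 2 * k - 2 ∧ a.val = 1)))) := by
  simp [Hk, fromRel_adj]

lemma hk_cross {k : ℕ} (hk : 2 ≤ k) {a b : Fin (2*k)} (h : (Hk k).Adj a b)
    (hp : a.val % 2 ≠ b.val % 2) :
    b.val = a.val + 1 ∨ a.val = b.val + 1 ∨ (a.val = 2*k - 1 ∧ b.val = 0) ∨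
      (b.val = 2*k - 1 ∧ a.val = 0) ∨ (a.val = 2*k - 2 ∧ b.val = 1) ∨
      (b.val = 2*k - 2 ∧ a.val = 1) := by
  have ha := a.isLt; have hb := b.isLt
  rw [hk_adj] at h
  obtain ⟨hne, h⟩ := h
  rcases Nat.mod_two_eq_zero_or_one k with hm | hm
  · rw [if_pos hm, if_pos hm] at h; omega
  · rw [if_neg (by omega), if_neg (by omega)] at h; omega

lemma hk_same {k : ℕ} (hk : 2 ≤ k) {a b c : Fin (2*k)} (h1 : (Hk k).Adj a b)
    (h2 : (Hk k).Adj a c) (p1 : b.val % 2 = a.val % 2) (p2 : c.val % 2 = a.val % 2) :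
    b = c := by
  have ha := a.isLt; have hb := b.isLt; have hc := c.isLt
  rw [hk_adj] at h1 h2
  obtain ⟨hne1, h1⟩ := h1; obtain ⟨hne2, h2⟩ := h2
  apply Fin.ext
  rcases Nat.mod_two_eq_zero_or_one k with hm | hm
  · rw [if_pos hm, if_pos hm] at h1 h2; omega
  · rw [if_neg (by omega), if_neg (by omega)] at h1 h2; omega

lemma hk_succ {k : ℕ} (hk : 2 ≤ k) (a : Fin (2*k)) :
    ∃ s : Fin (2*k), (Hk k).Adj a s ∧ s.val = (if a.val + 1 = 2*k then 0 else a.val + 1) := by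
  have ha := a.isLt
  by_cases hw : a.val + 1 = 2*k
  · refine ⟨⟨0, by omega⟩, ?_, by simp [hw]⟩
    rw [hk_adj]
    exact ⟨Fin.ne_of_val_ne (by show a.val ≠ 0; omega), Or.inl (Or.inr (Or.inl ⟨by omega, rfl⟩))⟩
  · refine ⟨⟨a.val + 1, by omega⟩, ?_, by simp [hw]⟩
    rw [hk_adj]
    exact ⟨Fin.ne_of_val_ne (by show a.val ≠ a.val + 1; omega), Or.inl (Or.inl rfl)⟩

lemma hk_pred {k : ℕ} (hk : 2 ≤ k) (a : Fin (2*k)) :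
    ∃ s : Fin (2*k), (Hk k).Adj a s ∧ s.val = (if a.val = 0 then 2*k - 1 else a.val - 1) := by
  have ha := a.isLt
  by_cases hw : a.val = 0
  · refine ⟨⟨2*k - 1, by omega⟩, ?_, by simp [hw]⟩
    rw [hk_adj]
    exact ⟨Fin.ne_of_val_ne (by show a.val ≠ 2*k-1; omega), Or.inr (Or.inr (Or.inl ⟨rfl, hw⟩))⟩
  · refine ⟨⟨a.val - 1, by omega⟩, ?_, by simp [hw]⟩
    rw [hk_adj]
    refine ⟨Fin.ne_of_val_ne (by show a.val ≠ a.val - 1; omega), Or.inr (Or.inl ?_)⟩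
    show a.val = a.val - 1 + 1
    omega

lemma hk_cross_lb {k : ℕ} (hk : 2 ≤ k) (a : Fin (2*k)) :
    2 ≤ (Finset.univ.filter (fun b : Fin (2*k) =>
      (Hk k).Adj a b ∧ b.val % 2 ≠ a.val % 2)).card := by
  have ha := a.isLt
  obtain ⟨s, hs, hsv⟩ := hk_succ hk a
  obtain ⟨p, hp, hpv⟩ := hk_pred hk a
  have hsp : s ≠ p := by
    apply Fin.ne_of_val_ne
    rw [hsv, hpv]; split_ifs <;> omega
  have hs2 : s.val % 2 ≠ a.val % 2 := by rw [hsv]; split_ifs <;> omega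
  have hp2 : p.val % 2 ≠ a.val % 2 := by rw [hpv]; split_ifs <;> omega
  apply Finset.one_lt_card.2
  exact ⟨s, by simp [hs, hs2], p, by simp [hp, hp2], hsp⟩

lemma hk_cross_ub {k : ℕ} (hk : 2 ≤ k) (a : Fin (2*k)) :
    (Finset.univ.filter (fun b : Fin (2*k) =>
      (Hk k).Adj a b ∧ b.val % 2 ≠ a.val % 2)).card ≤ 3 := by
  have ha := a.isLt
  set t : Finset ℕ := {(if a.val + 1 = 2*k then 0 else a.val + 1),
    (if a.val = 0 then 2*k - 1 else a.val - 1),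
    (if a.val = 1 then 2*k - 2 else if a.val = 2*k - 2 then 1 else 0)} with ht
  have hsub : ∀ b ∈ (Finset.univ.filter (fun b : Fin (2*k) =>
      (Hk k).Adj a b ∧ b.val % 2 ≠ a.val % 2)), b.val ∈ t := by
    intro b hb
    simp only [Finset.mem_filter] at hb
    have hc := hk_cross hk hb.2.1 (fun h => hb.2.2 h.symm)
    have hbv := b.isLt
    simp only [ht, Finset.mem_insert, Finset.mem_singleton]
    split_ifs <;> omega
  calc (Finset.univ.filter (fun b : Fin (2*k) =>
      (Hk k).Adj a b ∧ b.val % 2 ≠ a.val % 2)).card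
      ≤ t.card := Finset.card_le_card_of_injOn (fun b => b.val) hsub
        (fun x _ y _ h => Fin.ext h)
    _ ≤ 3 := by
        apply le_trans (Finset.card_insert_le _ _)
        have := Finset.card_insert_le (if a.val = 0 then 2*k - 1 else a.val - 1)
          ({(if a.val = 1 then 2*k - 2 else if a.val = 2*k - 2 then 1 else 0)} : Finset ℕ)
        simp at this ⊢
        omega
section Aux
variable {V W : Type*} (G : SimpleGraph V) (H : SimpleGraph W) (π : V ≃ W)

lemma mismatch_adj (a b : W) : (mismatchGraph G H π).Adj a b ↔
    ((G.map π.toEmbedding).Adj a b ∧ ¬ H.Adj a b) ∨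
      (H.Adj a b ∧ ¬ (G.map π.toEmbedding).Adj a b) := by
  simp [mismatchGraph, symmDiff, sup_adj, sdiff_adj]

variable {G H π}

lemma signedAdj_pos {a b : W} (h1 : (G.map π.toEmbedding).Adj a b) (h2 : ¬ H.Adj a b) :
    signedAdj G H π a b = 1 := by
  unfold signedAdj; split_ifs <;> tauto

lemma signedAdj_neg {a b : W} (h1 : H.Adj a b) (h2 : ¬ (G.map π.toEmbedding).Adj a b) :
    signedAdj G H π a b = -1 := by
  unfold signedAdj; split_ifs <;> tauto

lemma signedAdj_zero {a b : W} (h : ¬ (mismatchGraph G H π).Adj a b) :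
    signedAdj G H π a b = 0 := by
  rw [mismatch_adj] at h
  unfold signedAdj; split_ifs <;> tauto

lemma signedAdj_sq {a b : W} (h : (mismatchGraph G H π).Adj a b) :
    signedAdj G H π a b * signedAdj G H π a b = 1 := by
  rw [mismatch_adj] at h
  unfold signedAdj; split_ifs <;> first | tauto | norm_num

lemma signedAdj_abs (a b : W) : |signedAdj G H π a b| ≤ 1 := by
  unfold signedAdj; split_ifs <;> norm_num

lemma signedAdj_abs_eq {a b : W} (h : (mismatchGraph G H π).Adj a b) :
    |signedAdj G H π a b| = 1 := by
  rw [mismatch_adj] at h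
  unfold signedAdj; split_ifs <;> first | tauto | norm_num

lemma signedAdj_symm (a b : W) : signedAdj G H π a b = signedAdj G H π b a := by
  have h1 : (G.map π.toEmbedding).Adj a b ↔ (G.map π.toEmbedding).Adj b a := adj_comm _ _ _
  have h2 : H.Adj a b ↔ H.Adj b a := adj_comm _ _ _
  unfold signedAdj; split_ifs <;> tauto

lemma map_equiv_adj (a b : W) : (G.map π.toEmbedding).Adj a b ↔ G.Adj (π.symm a) (π.symm b) := by
  rw [map_adj]
  constructor
  · rintro ⟨u, v, h, rfl, rfl⟩; simpa using h
  · intro h; exact ⟨π.symm a, π.symm b, h, π.apply_symm_apply a, π.apply_symm_apply b⟩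

lemma map_equiv_card [Fintype V] [Fintype W] [DecidableEq V] [DecidableEq W]
    [DecidableRel G.Adj] (hreg : G.IsRegularOfDegree 3) (w : W) :
    (Finset.univ.filter (fun v => (G.map π.toEmbedding).Adj w v)).card = 3 := by
  have : (Finset.univ.filter (fun v => (G.map π.toEmbedding).Adj w v)).card
      = (Finset.univ.filter (fun u => G.Adj (π.symm w) u)).card := by
    apply Finset.card_bij' (fun v _ => π.symm v) (fun u _ => π u)
    · intro v hv
      simp only [Finset.mem_filter, Finset.mem_univ, true_and] at hv ⊢
      rw [map_equiv_adj] at hv; exact hv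
    · intro u hu
      simp only [Finset.mem_filter, Finset.mem_univ, true_and] at hu ⊢
      rw [map_equiv_adj]; simpa using hu
    · intro v _; simp
    · intro u _; simp
  rw [this]
  have : (Finset.univ.filter (fun u => G.Adj (π.symm w) u)) = G.neighborFinset (π.symm w) := by
    ext u; simp [mem_neighborFinset]
  rw [this]
  exact hreg _

end Aux


/-- Let `k ≥ 2`, `G` a 3-regular bipartite graph on `2k` vertices with
bipartition into independent sets `A, B` of size `k`, and `σ ∈ Res(G, H_k)`. Let `A(σ)` be
the signed adjacency matrix of the mismatch graph `G^σ − H_k` and `P(σ) = A(σ)²`. Then for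
every vertex `x` of degree `4` in `G^σ − H_k` there is a vertex `v ≠ x` with `P(σ)ₓᵥ ≠ 0`. -/
theorem statement_12 {V : Type*} [Fintype V] [DecidableEq V] (k : ℕ) (hk : 2 ≤ k)
    (G : SimpleGraph V) [DecidableRel G.Adj] (A B : Finset V)
    (hcard : Fintype.card V = 2 * k) (hA : A.card = k) (hB : B.card = k)
    (hUnion : ∀ v, v ∈ A ∨ v ∈ B) (hDisj : Disjoint A B)
    (hreg : G.IsRegularOfDegree 3)
    (hAind : ∀ u ∈ A, ∀ v ∈ A, ¬ G.Adj u v) (hBind : ∀ u ∈ B, ∀ v ∈ B, ¬ G.Adj u v)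
    (σ : V ≃ Fin (2 * k)) (hσ : InRes k A σ) :
    ∀ x : Fin (2 * k), mismatchDeg G (Hk k) σ x = 4 →
      ∃ v : Fin (2 * k), v ≠ x ∧ (signedAdj G (Hk k) σ * signedAdj G (Hk k) σ) x v ≠ 0 := by
  classical
  intro x hdeg
  by_contra hcon
  push_neg at hcon
  -- hcon : ∀ v, v ≠ x → (signedAdj G (Hk k) σ * signedAdj G (Hk k) σ) x v = 0
  set Am := signedAdj G (Hk k) σ with hAm
  set E : Finset (Fin (2*k)) :=
    Finset.univ.filter (fun v : Fin (2*k) => v.val % 2 = x.val % 2) with hE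
  set N : Finset (Fin (2*k)) :=
    Finset.univ.filter (fun v : Fin (2*k) => (mismatchGraph G (Hk k) σ).Adj x v) with hN
  -- G^σ edges join vertices of different parity
  have hGmcross : ∀ a b : Fin (2*k), (G.map σ.toEmbedding).Adj a b →
      a.val % 2 ≠ b.val % 2 := by
    intro a b hab heq
    rw [map_equiv_adj] at hab
    have hu := hσ (σ.symm a)
    have hv := hσ (σ.symm b)
    rw [Equiv.apply_symm_apply] at hu hv
    rcases Nat.mod_two_eq_zero_or_one a.val with h0 | h1
    · exact hAind _ (hu.mpr h0) _ (hv.mpr (by omega)) hab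
    · have hua : σ.symm a ∈ B := by
        rcases hUnion (σ.symm a) with h | h
        · exact absurd (hu.mp h) (by omega)
        · exact h
      have hvb : σ.symm b ∈ B := by
        rcases hUnion (σ.symm b) with h | h
        · exact absurd (hv.mp h) (by omega)
        · exact h
      exact hBind _ hua _ hvb hab
  have hGm3 : ∀ w : Fin (2*k),
      (Finset.univ.filter (fun v => (G.map σ.toEmbedding).Adj w v)).card = 3 :=
    fun w => map_equiv_card hreg w
  -- the degree-4 hypothesis, in Finset form
  have hN4 : N.card = 4 := by
    have hset : (mismatchGraph G (Hk k) σ).neighborSet x = ↑N := by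
      ext v
      simp [hN, SimpleGraph.neighborSet]
    rw [mismatchDeg, hset, Set.ncard_coe_finset] at hdeg
    exact hdeg
  have hnotN : ∀ w : Fin (2*k), w ∉ N → ¬ (mismatchGraph G (Hk k) σ).Adj x w := by
    intro w hw hadj
    exact hw (by rw [hN, Finset.mem_filter]; exact ⟨Finset.mem_univ w, hadj⟩)
  -- sum of |entries| of row x is 4
  have habs4 : ∑ w : Fin (2*k), |Am x w| = 4 := by
    have h0 : ∀ w ∈ Finset.univ, w ∉ N → |Am x w| = 0 := by
      intro w _ hw
      rw [hAm, signedAdj_zero (hnotN w hw), abs_zero]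
    rw [← Finset.sum_subset (Finset.subset_univ N) h0]
    have : ∀ w ∈ N, |Am x w| = 1 := by
      intro w hw
      rw [hN, Finset.mem_filter] at hw
      exact signedAdj_abs_eq hw.2
    rw [Finset.sum_congr rfl this, Finset.sum_const, hN4]
    norm_num
  -- diagonal entry of the square is 4
  have hxx : (Am * Am) x x = 4 := by
    rw [Matrix.mul_apply]
    have hsymm : ∀ w : Fin (2*k), Am x w * Am w x = Am x w * Am x w := by
      intro w; rw [hAm, signedAdj_symm x w]
    rw [Finset.sum_congr rfl (fun w _ => hsymm w)]
    have h0 : ∀ w ∈ Finset.univ, w ∉ N → Am x w * Am x w = 0 := by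
      intro w _ hw
      rw [hAm, signedAdj_zero (hnotN w hw), mul_zero]
    rw [← Finset.sum_subset (Finset.subset_univ N) h0]
    have : ∀ w ∈ N, Am x w * Am x w = 1 := by
      intro w hw
      rw [hN, Finset.mem_filter] at hw
      exact signedAdj_sq hw.2
    rw [Finset.sum_congr rfl this, Finset.sum_const, hN4]
    norm_num
  -- the parity-restricted row sum of the square is 4
  have hEsum : ∑ v ∈ E, (Am * Am) x v = 4 := by
    rw [Finset.sum_eq_single_of_mem x (by simp [hE]) (fun v _ hv => hcon v hv), hxx]
  -- swap the sums
  have hswap : ∑ v ∈ E, (Am * Am) x v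
      = ∑ w : Fin (2*k), Am x w * (∑ v ∈ E, Am w v) := by
    simp only [Matrix.mul_apply]
    rw [Finset.sum_comm]
    exact Finset.sum_congr rfl fun w _ => (Finset.mul_sum _ _ _).symm
  -- bounds for the parity-restricted row sums
  have hSw : ∀ w : Fin (2*k),
      (w.val % 2 ≠ x.val % 2 → 0 ≤ ∑ v ∈ E, Am w v ∧ ∑ v ∈ E, Am w v ≤ 1) ∧
      (w.val % 2 = x.val % 2 → -1 ≤ ∑ v ∈ E, Am w v ∧ ∑ v ∈ E, Am w v ≤ 0) := by
    intro w
    constructor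
    · -- cross parity
      intro hw
      set P : Finset (Fin (2*k)) := Finset.univ.filter
        (fun v => (G.map σ.toEmbedding).Adj w v ∧ ¬ (Hk k).Adj w v) with hP
      set Q : Finset (Fin (2*k)) := E.filter
        (fun v => (Hk k).Adj w v ∧ ¬ (G.map σ.toEmbedding).Adj w v) with hQ
      set I : Finset (Fin (2*k)) := Finset.univ.filter
        (fun v => (G.map σ.toEmbedding).Adj w v ∧ (Hk k).Adj w v) with hI
      have hmemE : ∀ v : Fin (2*k), (G.map σ.toEmbedding).Adj w v → v ∈ E := by
        intro v hv
        have := hGmcross w v hv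
        rw [hE, Finset.mem_filter]
        exact ⟨Finset.mem_univ v, by omega⟩
      have hPQsub : P ∪ Q ⊆ E := by
        intro v hv
        rcases Finset.mem_union.mp hv with h | h
        · exact hmemE v ((Finset.mem_filter.mp h).2.1)
        · exact Finset.mem_of_mem_filter v h
      have hzero : ∀ v ∈ E, v ∉ P ∪ Q → Am w v = 0 := by
        intro v hvE hv
        rw [Finset.mem_union] at hv
        push_neg at hv
        apply signedAdj_zero
        rw [mismatch_adj]
        rintro (⟨h1, h2⟩ | ⟨h1, h2⟩)
        · exact hv.1 (by rw [hP, Finset.mem_filter]; exact ⟨Finset.mem_univ v, h1, h2⟩)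
        · exact hv.2 (by rw [hQ, Finset.mem_filter]; exact ⟨hvE, h1, h2⟩)
      have hdisjPQ : Disjoint P Q := by
        rw [Finset.disjoint_left]
        intro v hvP hvQ
        rw [hP, Finset.mem_filter] at hvP
        rw [hQ, Finset.mem_filter] at hvQ
        exact hvQ.2.2 hvP.2.1
      have hsum : ∑ v ∈ E, Am w v = (P.card : ℝ) - (Q.card : ℝ) := by
        rw [← Finset.sum_subset hPQsub hzero, Finset.sum_union hdisjPQ]
        have h1 : ∀ v ∈ P, Am w v = 1 := by
          intro v hv; rw [hP, Finset.mem_filter] at hv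
          exact signedAdj_pos hv.2.1 hv.2.2
        have h2 : ∀ v ∈ Q, Am w v = -1 := by
          intro v hv; rw [hQ, Finset.mem_filter] at hv
          exact signedAdj_neg hv.2.1 hv.2.2
        rw [Finset.sum_congr rfl h1, Finset.sum_congr rfl h2,
          Finset.sum_const, Finset.sum_const]
        simp only [nsmul_eq_mul]
        ring
      have hc1 : P.card + I.card = 3 := by
        have hunion : P ∪ I = Finset.univ.filter
            (fun v => (G.map σ.toEmbedding).Adj w v) := by
          ext v
          rw [Finset.mem_union, hP, hI, Finset.mem_filter, Finset.mem_filter,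
            Finset.mem_filter]
          simp only [Finset.mem_univ, true_and]
          tauto
        have hd : Disjoint P I := by
          rw [Finset.disjoint_left]
          intro v h1 h2
          rw [hP, Finset.mem_filter] at h1
          rw [hI, Finset.mem_filter] at h2
          exact h1.2.2 h2.2.2
        have := Finset.card_union_of_disjoint hd
        rw [hunion, hGm3 w] at this
        omega
      have hc2 : Q.card + I.card = (E.filter (fun v => (Hk k).Adj w v)).card := by
        have hunion : Q ∪ I = E.filter (fun v => (Hk k).Adj w v) := by
          ext v
          simp only [hQ, hI, hE, Finset.mem_union, Finset.mem_filter,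
            Finset.mem_univ, true_and]
          constructor
          · rintro (⟨h1, h2, h3⟩ | ⟨h1, h2⟩)
            · exact ⟨h1, h2⟩
            · have := hGmcross w v h1
              exact ⟨by omega, h2⟩
          · rintro ⟨h1, h2⟩
            by_cases hg : (G.map σ.toEmbedding).Adj w v
            · exact Or.inr ⟨hg, h2⟩
            · exact Or.inl ⟨h1, h2, hg⟩
        have hd : Disjoint Q I := by
          rw [Finset.disjoint_left]
          intro v h1 h2
          rw [hQ, Finset.mem_filter] at h1
          rw [hI, Finset.mem_filter] at h2
          exact h1.2.2 h2.2.1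
        have := Finset.card_union_of_disjoint hd
        rw [hunion] at this
        omega
      have hCH : E.filter (fun v => (Hk k).Adj w v) = Finset.univ.filter
          (fun b => (Hk k).Adj w b ∧ b.val % 2 ≠ w.val % 2) := by
        ext v
        simp only [hE, Finset.mem_filter, Finset.mem_univ, true_and]
        constructor
        · rintro ⟨hp, hH⟩
          exact ⟨hH, by omega⟩
        · rintro ⟨hH, hp⟩
          exact ⟨by omega, hH⟩
      have hub := hk_cross_ub hk w
      have hlb := hk_cross_lb hk w
      rw [← hCH] at hub hlb
      have hQP : Q.card ≤ P.card ∧ P.card ≤ Q.card + 1 := by omega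
      constructor
      · rw [hsum]
        have : (Q.card : ℝ) ≤ P.card := by exact_mod_cast hQP.1
        linarith
      · rw [hsum]
        have : (P.card : ℝ) ≤ (Q.card : ℝ) + 1 := by exact_mod_cast hQP.2
        linarith
    · -- same parity
      intro hw
      set F : Finset (Fin (2*k)) := E.filter
        (fun v => (Hk k).Adj w v ∧ ¬ (G.map σ.toEmbedding).Adj w v) with hF
      have hFE : F ⊆ E := by rw [hF]; exact Finset.filter_subset _ _
      have hzero : ∀ v ∈ E, v ∉ F → Am w v = 0 := by
        intro v hvE hv
        apply signedAdj_zero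
        rw [mismatch_adj]
        rintro (⟨h1, h2⟩ | ⟨h1, h2⟩)
        · have hcr := hGmcross w v h1
          have hvp : v.val % 2 = x.val % 2 := by
            have h := hvE
            rw [hE, Finset.mem_filter] at h
            exact h.2
          omega
        · exact hv (by rw [hF, Finset.mem_filter]; exact ⟨hvE, h1, h2⟩)
      have hsum : ∑ v ∈ E, Am w v = -(F.card : ℝ) := by
        rw [← Finset.sum_subset hFE hzero]
        have h2 : ∀ v ∈ F, Am w v = -1 := by
          intro v hv; rw [hF, Finset.mem_filter] at hv
          exact signedAdj_neg hv.2.1 hv.2.2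
        rw [Finset.sum_congr rfl h2, Finset.sum_const]
        simp
      have hF1 : F.card ≤ 1 := by
        apply Finset.card_le_one.mpr
        intro a ha b hb
        rw [hF, Finset.mem_filter] at ha hb
        have hpa : a.val % 2 = w.val % 2 := by
          have h := ha.1
          rw [hE, Finset.mem_filter] at h
          omega
        have hpb : b.val % 2 = w.val % 2 := by
          have h := hb.1
          rw [hE, Finset.mem_filter] at h
          omega
        exact hk_same hk ha.2.1 hb.2.1 hpa hpb
      constructor
      · rw [hsum]
        have : (F.card : ℝ) ≤ 1 := by exact_mod_cast hF1
        linarith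
      · rw [hsum]
        have : (0:ℝ) ≤ (F.card : ℝ) := Nat.cast_nonneg _
        linarith
  -- existence of a cross-parity negative neighbor of x
  have hn : ∃ nb : Fin (2*k), (Hk k).Adj x nb ∧ ¬ (G.map σ.toEmbedding).Adj x nb ∧
      nb.val % 2 ≠ x.val % 2 := by
    by_contra hno
    push_neg at hno
    set P : Finset (Fin (2*k)) := Finset.univ.filter
      (fun v => (G.map σ.toEmbedding).Adj x v ∧ ¬ (Hk k).Adj x v) with hP
    set Q : Finset (Fin (2*k)) := Finset.univ.filter
      (fun v => (Hk k).Adj x v ∧ ¬ (G.map σ.toEmbedding).Adj x v) with hQ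
    set I : Finset (Fin (2*k)) := Finset.univ.filter
      (fun v => (G.map σ.toEmbedding).Adj x v ∧ (Hk k).Adj x v) with hI
    have hNPQ : N = P ∪ Q := by
      ext v
      rw [hN, hP, hQ, Finset.mem_union, Finset.mem_filter, Finset.mem_filter,
        Finset.mem_filter]
      simp only [Finset.mem_univ, true_and]
      rw [mismatch_adj]
    have hdisjPQ : Disjoint P Q := by
      rw [Finset.disjoint_left]
      intro v h1 h2
      rw [hP, Finset.mem_filter] at h1
      rw [hQ, Finset.mem_filter] at h2
      exact h2.2.2 h1.2.1
    have h1 : P.card + Q.card = 4 := by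
      have := Finset.card_union_of_disjoint hdisjPQ
      rw [← hNPQ, hN4] at this
      omega
    have h2 : P.card + I.card = 3 := by
      have hunion : P ∪ I = Finset.univ.filter
          (fun v => (G.map σ.toEmbedding).Adj x v) := by
        ext v
        rw [Finset.mem_union, hP, hI, Finset.mem_filter, Finset.mem_filter,
          Finset.mem_filter]
        simp only [Finset.mem_univ, true_and]
        tauto
      have hd : Disjoint P I := by
        rw [Finset.disjoint_left]
        intro v hv1 hv2
        rw [hP, Finset.mem_filter] at hv1
        rw [hI, Finset.mem_filter] at hv2
        exact hv1.2.2 hv2.2.2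
      have := Finset.card_union_of_disjoint hd
      rw [hunion, hGm3 x] at this
      omega
    have hQ1 : Q.card ≤ 1 := by
      apply Finset.card_le_one.mpr
      intro a ha b hb
      rw [hQ, Finset.mem_filter] at ha hb
      exact hk_same hk ha.2.1 hb.2.1 (hno a ha.2.1 ha.2.2) (hno b hb.2.1 hb.2.2)
    have hI0 : I.card = 0 := by omega
    have hlb := hk_cross_lb hk x
    obtain ⟨c, hc⟩ := Finset.card_pos.mp (lt_of_lt_of_le (by norm_num) hlb)
    rw [Finset.mem_filter] at hc
    obtain ⟨-, hcH, hcp⟩ := hc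
    by_cases hg : (G.map σ.toEmbedding).Adj x c
    · have hcI : c ∈ I := by
        rw [hI, Finset.mem_filter]
        exact ⟨Finset.mem_univ c, hg, hcH⟩
      rw [Finset.card_eq_zero.mp hI0] at hcI
      exact absurd hcI (Finset.notMem_empty c)
    · exact hcp (hno c hcH hg)
  obtain ⟨n, hnH, hnG, hnp⟩ := hn
  have hAxn : Am x n = -1 := signedAdj_neg hnH hnG
  have h4 : (4:ℝ) = ∑ w : Fin (2*k), Am x w * (∑ v ∈ E, Am w v) := by
    rw [← hswap, hEsum]
  have hsplitsum : ∑ w : Fin (2*k), Am x w * (∑ v ∈ E, Am w v)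
      = Am x n * (∑ v ∈ E, Am n v)
        + ∑ w ∈ Finset.univ.erase n, Am x w * (∑ v ∈ E, Am w v) :=
    (Finset.add_sum_erase _ _ (Finset.mem_univ n)).symm
  have hb1 : Am x n * (∑ v ∈ E, Am n v) ≤ 0 := by
    rw [hAxn]
    have := ((hSw n).1 hnp).1
    linarith
  have hb2 : ∑ w ∈ Finset.univ.erase n, Am x w * (∑ v ∈ E, Am w v)
      ≤ ∑ w ∈ Finset.univ.erase n, |Am x w| := by
    apply Finset.sum_le_sum
    intro w _
    have habsS : |∑ v ∈ E, Am w v| ≤ 1 := by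
      rcases eq_or_ne (w.val % 2) (x.val % 2) with h | h
      · have h' := (hSw w).2 h
        rw [abs_le]
        exact ⟨h'.1, by linarith [h'.2]⟩
      · have h' := (hSw w).1 h
        rw [abs_le]
        constructor <;> linarith [h'.1, h'.2]
    calc Am x w * (∑ v ∈ E, Am w v) ≤ |Am x w * (∑ v ∈ E, Am w v)| := le_abs_self _
      _ = |Am x w| * |∑ v ∈ E, Am w v| := abs_mul _ _
      _ ≤ |Am x w| * 1 := mul_le_mul_of_nonneg_left habsS (abs_nonneg _)
      _ = |Am x w| := mul_one _
  have hb3 : ∑ w ∈ Finset.univ.erase n, |Am x w| = 3 := by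
    rw [Finset.sum_erase_eq_sub (Finset.mem_univ n), habs4, hAxn]
    norm_num
  rw [hsplitsum] at h4
  linarith
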